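/- arXiv:1909.10753 — 6 statements merged into one kernel-verified Lean document; each statement's English description precedes it below -/
import Mathlib

section
/- Let f ∈ ℤ[X] be a monic polynomial of degree d that is irreducible over ℚ, with roots β₁,…,β_d, and let Z be the d×d Vandermonde matrix with entries Z_{ij} = β_j^{i-1}. If r ∈ ℚ^d is a rational vector such that at least one component of Z⁻¹ r vanishes, then r = 0. -/
/-! Put `c = Z⁻¹ r`, so `∑ⱼ βⱼ ^ m cⱼ = r_m`. Pairing these equations with the coefficients of
`f / (X - βⱼ)`, which vanishes at the other roots and equals `f'(βⱼ)` at `βⱼ`, gives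
`cⱼ f'(βⱼ) = G(βⱼ)` for one polynomial `G ∈ ℚ[X]` not depending on `j`. If `cᵢ = 0`, then `f`,
being the minimal polynomial of `βᵢ`, divides `G`, so `G` vanishes at every root; as `f` is
separable, `f'(βⱼ) ≠ 0` and hence `c = 0`, i.e. `r = Z c = 0`. -/

open Matrix Polynomial

namespace Polynomial

section CommRing

variable {R : Type*} [CommRing R]

/-- The quotient `(p(X) - p(Y)) / (X - Y)`, as a polynomial in `X` over `R[Y]`. -/
noncomputable def divXSubY (p : R[X]) : R[X][X] := p.map C /ₘ (X - C X)

theorem map_aeval_divXSubY {A : Type*} [CommRing A] [Algebra R A] (p : R[X]) (a : A) :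
    (divXSubY p).map (aeval a).toRingHom = p.map (algebraMap R A) /ₘ (X - C a) := by
  rw [divXSubY, map_divByMonic _ (monic_X_sub_C _), Polynomial.map_map, Polynomial.map_sub,
    map_X, map_C]
  congr 2
  · ext; simp
  · simp

theorem aeval_sum_C_mul_coeff_divXSubY {A : Type*} [CommRing A] [Algebra R A] {d : ℕ}
    (p : R[X]) (w : Fin d → R) (a : A) :
    aeval a (∑ m : Fin d, C (w m) * (divXSubY p).coeff m) =
      ∑ m : Fin d, algebraMap R A (w m) * (p.map (algebraMap R A) /ₘ (X - C a)).coeff m := by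
  simp only [← map_aeval_divXSubY, coeff_map, map_sum, map_mul, aeval_C]
  rfl

theorem eval_divByMonic_X_sub_C_self (p : R[X]) (a : R) :
    (p /ₘ (X - C a)).eval a = p.derivative.eval a := by
  simpa using
    congrArg (eval a) (divByMonic_add_X_sub_C_mul_derivative_divByMonic_eq_derivative p a)

theorem eval_divByMonic_X_sub_C_of_isRoot [IsDomain R] {p : R[X]} {a b : R} (ha : p.IsRoot a)
    (hb : p.IsRoot b) (hab : a ≠ b) : (p /ₘ (X - C a)).eval b = 0 := by
  have := congrArg (eval b) (mul_divByMonic_eq_iff_isRoot.2 ha)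
  rw [eval_mul, hb.eq_zero] at this
  simpa [sub_ne_zero.2 hab.symm] using this

theorem sum_vandermonde_mulVec_mul_coeff_divByMonic [IsDomain R] {d : ℕ} {p : R[X]}
    (hp : p.natDegree ≤ d) {β : Fin d → R} (hβ : Function.Injective β) (hroot : ∀ j, p.IsRoot (β j))
    (c : Fin d → R) (j : Fin d) :
    ∑ m : Fin d, ((vandermonde β)ᵀ *ᵥ c) m * (p /ₘ (X - C (β j))).coeff m =
      c j * p.derivative.eval (β j) := by
  have hdeg : (p /ₘ (X - C (β j))).natDegree < d := by
    rw [natDegree_divByMonic _ (monic_X_sub_C _), natDegree_X_sub_C]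
    have := j.pos
    omega
  have heval : ∀ l, ∑ m : Fin d, β l ^ (m : ℕ) * (p /ₘ (X - C (β j))).coeff m =
      (p /ₘ (X - C (β j))).eval (β l) := by
    intro l
    rw [eval_eq_sum_range' hdeg, ← Fin.sum_univ_eq_sum_range]
    simp only [mul_comm]
  calc ∑ m : Fin d, ((vandermonde β)ᵀ *ᵥ c) m * (p /ₘ (X - C (β j))).coeff m
      = ∑ l, c l * (p /ₘ (X - C (β j))).eval (β l) := by
        simp only [mulVec, dotProduct, transpose_apply, vandermonde_apply, Finset.sum_mul,
          ← heval, Finset.mul_sum]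
        rw [Finset.sum_comm]
        simp only [mul_comm (c _), mul_assoc]
    _ = c j * p.derivative.eval (β j) := by
        rw [Finset.sum_eq_single j, eval_divByMonic_X_sub_C_self]
        · intro l _ hlj
          rw [eval_divByMonic_X_sub_C_of_isRoot (hroot j) (hroot l) (hβ.ne hlj.symm), mul_zero]
        · simp

end CommRing

end Polynomial

theorem eq_zero_of_vandermonde_mulVec_eq_algebraMap {K L : Type*} [Field K] [PerfectField K]
    [Field L] [Algebra K L] {d : ℕ} {p : K[X]} (hmon : p.Monic) (hirr : Irreducible p)
    (hdeg : p.natDegree = d) {β : Fin d → L} (hβ : Function.Injective β)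
    (hroot : ∀ j, aeval (β j) p = 0) {r : Fin d → K} {c : Fin d → L}
    (hc : (vandermonde β)ᵀ *ᵥ c = fun m ↦ algebraMap K L (r m)) {i : Fin d} (hi : c i = 0) :
    c = 0 := by
  set P := p.map (algebraMap K L)
  have hProot : ∀ j, P.IsRoot (β j) := by simpa [P, IsRoot, eval_map_algebraMap] using hroot
  set G := ∑ m : Fin d, C (r m) * (divXSubY p).coeff m
  have hG : ∀ j, aeval (β j) G = c j * P.derivative.eval (β j) := by
    intro j
    rw [aeval_sum_C_mul_coeff_divXSubY, ← sum_vandermonde_mulVec_mul_coeff_divByMonic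
      (by rw [hmon.natDegree_map, hdeg]) hβ hProot, hc]
  have hp_dvd : p ∣ G := by
    rw [minpoly.eq_of_irreducible_of_monic hirr (hroot i) hmon]
    exact minpoly.dvd K (β i) (by rw [hG, hi, zero_mul])
  ext j
  have hGj : aeval (β j) G = 0 := by
    obtain ⟨q, hq⟩ := hp_dvd
    rw [hq, map_mul, hroot j, zero_mul]
  have hP' : P.derivative.eval (β j) ≠ 0 :=
    (PerfectField.separable_of_irreducible hirr).map.eval₂_derivative_ne_zero (RingHom.id L)
      (hProot j)
  rw [hG] at hGj
  exact (mul_eq_zero.1 hGj).resolve_right hP'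

theorem stmt_1_general {d : ℕ}
    (f : Polynomial ℤ) (hmon : f.Monic) (hdeg : f.natDegree = d)
    (hirr : Irreducible (f.map (Int.castRingHom ℚ)))
    (β : Fin d → ℂ) (hinj : Function.Injective β)
    (hroot : ∀ j, Polynomial.aeval (β j) f = 0)
    (Z : Matrix (Fin d) (Fin d) ℂ) (hZ : ∀ i j, Z i j = β j ^ (i : ℕ))
    (r : Fin d → ℚ)
    (hvan : ∃ i, (Z⁻¹ *ᵥ fun k => ((r k : ℂ))) i = 0) :
    r = 0 := by
  obtain ⟨i, hi⟩ := hvan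
  obtain rfl : Z = (vandermonde β)ᵀ := by ext; simp [hZ]
  have hdet : IsUnit (vandermonde β)ᵀ.det := by
    rw [det_transpose]
    exact (det_vandermonde_ne_zero_iff.2 hinj).isUnit
  have hc : (vandermonde β)ᵀ *ᵥ ((vandermonde β)ᵀ⁻¹ *ᵥ fun k ↦ (r k : ℂ)) =
      fun k ↦ algebraMap ℚ ℂ (r k) := by
    simp [mulVec_mulVec, mul_nonsing_inv _ hdet]
  have hc0 := eq_zero_of_vandermonde_mulVec_eq_algebraMap (hmon.map _) hirr
    (by rw [hmon.natDegree_map, hdeg]) hinj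
    (fun j ↦ by rw [← algebraMap_int_eq, aeval_map_algebraMap, hroot j]) hc hi
  ext k
  simpa [hc0] using (congrFun hc k).symm

/-- If `f ∈ ℤ[X]` is monic of degree `d`, irreducible over `ℚ`, with roots
`β 0, …, β (d-1)`, `Z` is the Vandermonde matrix `Z i j = (β j)^i`, and `r` is a
rational vector such that some component of `Z⁻¹ r` vanishes, then `r = 0`. -/
theorem stmt_1 {d : ℕ} (hd : 1 ≤ d)
    (f : Polynomial ℤ) (hmon : f.Monic) (hdeg : f.natDegree = d)
    (hirr : Irreducible (f.map (Int.castRingHom ℚ)))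
    (β : Fin d → ℂ) (hinj : Function.Injective β)
    (hroot : ∀ j, Polynomial.aeval (β j) f = 0)
    (Z : Matrix (Fin d) (Fin d) ℂ) (hZ : ∀ i j, Z i j = β j ^ (i : ℕ))
    (r : Fin d → ℚ)
    (hvan : ∃ i, (Z⁻¹ *ᵥ fun k => ((r k : ℂ))) i = 0) :
    r = 0 :=
  stmt_1_general f hmon hdeg hirr β hinj hroot Z hZ r hvan
end

section
/- Let f ∈ ℤ[X] be monic, irreducible over ℚ, of degree d, let β₁,…,β_d be its roots and z_j = (1, β_j, …, β_j^{d-1})ᵀ the columns of the Vandermonde matrix Z. For every proper nonempty subset I of {1,…,d}, the complex span of {z_j : j ∈ I} intersects ℚ^d only in the zero vector. -/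
open Matrix Polynomial

/-
Pick `k ∉ I`. Pairing a vector of coefficients with `z j` evaluates the corresponding polynomial
of degree `< d` at `β j`, so the coefficient vector of `f(X) / (X - β k)` is orthogonal to every
`z j` with `j ≠ k`, hence to `x`. For rational `x` this pairing equals `R(β k)`, where `R` is the
rational polynomial of degree `< d` obtained by pairing `x` with the divided difference
`(f(X) - f(Y)) / (X - Y)`; as `f` is the minimal polynomial of `β k`, `R = 0`. Finally `R`
determines `x`: if `i₀` is the first index with `x i₀ ≠ 0`, then, `f` being monic, the
coefficient of `Y ^ (d - 1 - i₀)` in `R` is `x i₀`.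
-/

theorem Matrix.dotProduct_eq_zero_of_mem_span {R ι : Type*} [CommSemiring R] [Fintype ι]
    {s : Set (ι → R)} {w : ι → R} (hs : ∀ v ∈ s, v ⬝ᵥ w = 0) {x : ι → R}
    (hx : x ∈ Submodule.span R s) : x ⬝ᵥ w = 0 := by
  induction hx using Submodule.span_induction with
  | mem v hv => exact hs v hv
  | zero => exact zero_dotProduct w
  | add u v _ _ hu hv => rw [add_dotProduct, hu, hv, add_zero]
  | smul c v _ hv => rw [smul_dotProduct, hv, smul_zero]

namespace Polynomial

theorem powers_dotProduct_coeff {R : Type*} [CommSemiring R] {d : ℕ} {g : R[X]}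
    (hg : g.natDegree < d) (a : R) :
    (fun i : Fin d => a ^ (i : ℕ)) ⬝ᵥ (fun i => g.coeff i) = g.eval a := by
  rw [eval_eq_sum_range' hg, dotProduct,
    Fin.sum_univ_eq_sum_range (fun i => a ^ i * g.coeff i)]
  simp_rw [mul_comm]

theorem eval_divByMonic_X_sub_C_eq_zero {R : Type*} [CommRing R] [IsDomain R] {p : R[X]}
    {a b : R} (ha : p.IsRoot a) (hb : p.IsRoot b) (hab : b ≠ a) :
    (p /ₘ (X - C a)).eval b = 0 := by
  have h := congrArg (eval b) (mul_divByMonic_eq_iff_isRoot.mpr ha)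
  rw [eval_mul, eval_sub, eval_X, eval_C, hb.eq_zero] at h
  exact (mul_eq_zero.mp h).resolve_left (sub_ne_zero.mpr hab)

section divDiffPairing

variable {K : Type*} [Field K] {d : ℕ}

/-- `divDiffPairing p x` is the polynomial `Y ↦ ∑ i, x i * [X ^ i] ((p X - p Y) / (X - Y))`. -/
noncomputable def divDiffPairing (p : K[X]) (x : Fin d → K) : K[X] :=
  ∑ i : Fin d, ∑ s ∈ Finset.Icc ((i : ℕ) + 1) p.natDegree,
    C (x i * p.coeff s) * X ^ (s - ((i : ℕ) + 1))

theorem aeval_divDiffPairing {L : Type*} [Field L] [Algebra K L] (p : K[X]) (x : Fin d → K)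
    (a : L) :
    aeval a (divDiffPairing p x) = (fun i => algebraMap K L (x i)) ⬝ᵥ
      fun i => (p.map (algebraMap K L) /ₘ (X - C a)).coeff i := by
  simp only [divDiffPairing, dotProduct, coeff_divByMonic_X_sub_C, natDegree_map, coeff_map,
    map_sum, Finset.mul_sum, map_mul, aeval_C, aeval_X_pow]
  refine Finset.sum_congr rfl fun i _ => Finset.sum_congr rfl fun s _ => by ring

theorem degree_divDiffPairing_lt (p : K[X]) (x : Fin d → K) :
    (divDiffPairing p x).degree < p.natDegree := by
  rw [← mem_degreeLT]
  refine Submodule.sum_mem _ fun i _ => Submodule.sum_mem _ fun s hs => ?_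
  rw [mem_degreeLT]
  refine (degree_C_mul_X_pow_le _ _).trans_lt ?_
  obtain ⟨h₁, h₂⟩ := Finset.mem_Icc.mp hs
  exact_mod_cast (by omega : s - ((i : ℕ) + 1) < p.natDegree)

theorem coeff_divDiffPairing (p : K[X]) (x : Fin d → K) (m : ℕ) :
    (divDiffPairing p x).coeff m = ∑ i, x i * p.coeff ((i : ℕ) + 1 + m) := by
  simp only [divDiffPairing, finsetSum_coeff, coeff_C_mul_X_pow]
  refine Finset.sum_congr rfl fun i _ => ?_
  rw [Finset.sum_congr rfl fun s hs => ?term, Finset.sum_ite_eq _ ((i : ℕ) + 1 + m)]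
  case term =>
    exact if_congr (by have := (Finset.mem_Icc.mp hs).1; omega) rfl rfl
  split_ifs with h
  · rfl
  · rw [coeff_eq_zero_of_natDegree_lt (by simp at h; omega), mul_zero]

theorem eq_zero_of_divDiffPairing_eq_zero {p : K[X]} (hp : p.Monic) (hd : p.natDegree = d)
    {x : Fin d → K} (hx : divDiffPairing p x = 0) : x = 0 := by
  classical
  by_contra hne
  obtain ⟨i₀, hi₀, hmin⟩ :=
    Finset.exists_min_image (Finset.univ.filter fun i => x i ≠ 0) id
      (by simpa [Finset.filter_nonempty_iff, funext_iff] using hne)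
  have hxi₀ : x i₀ ≠ 0 := (Finset.mem_filter.mp hi₀).2
  have hcoeff : (divDiffPairing p x).coeff (d - 1 - i₀) = x i₀ := by
    rw [coeff_divDiffPairing, Finset.sum_eq_single i₀]
    · rw [show (i₀ : ℕ) + 1 + (d - 1 - i₀) = p.natDegree by omega, hp.coeff_natDegree,
        mul_one]
    · intro i _ hi
      rcases lt_or_gt_of_ne hi with h | h
      · have : x i = 0 := by
          by_contra hxi
          exact absurd (hmin i (by simpa using hxi)) (not_le.mpr h)
        rw [this, zero_mul]
      · rw [coeff_eq_zero_of_natDegree_lt (by rw [Fin.lt_def] at h; omega), mul_zero]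
    · simp
  exact hxi₀ (by rw [← hcoeff, hx, coeff_zero])

theorem eq_zero_of_mem_span_powers {L : Type*} [Field L] [Algebra K L] {p : K[X]}
    (hp : p.Monic) (hirr : Irreducible p) (hd : p.natDegree = d) {β : Fin d → L}
    (hinj : Function.Injective β) (hroot : ∀ j, aeval (β j) p = 0) {I : Finset (Fin d)}
    (hI : I ≠ Finset.univ) {x : Fin d → K}
    (hx : (fun i => algebraMap K L (x i)) ∈
      Submodule.span L ((fun j (i : Fin d) => β j ^ (i : ℕ)) '' (I : Set (Fin d)))) :
    x = 0 := by
  obtain ⟨k, -, hk⟩ := Finset.exists_of_ssubset (Finset.ssubset_univ_iff.mpr hI)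
  have hroots : ∀ j, (p.map (algebraMap K L)).IsRoot (β j) := fun j => by
    rw [IsRoot, eval_map_algebraMap, hroot]
  set g := p.map (algebraMap K L) /ₘ (X - C (β k))
  have hg : g.natDegree < d := by
    rw [natDegree_divByMonic _ (monic_X_sub_C _), natDegree_map, natDegree_X_sub_C, hd]
    exact Nat.sub_lt k.pos one_pos
  have hpair : aeval (β k) (divDiffPairing p x) = 0 := by
    rw [aeval_divDiffPairing]
    refine dotProduct_eq_zero_of_mem_span ?_ hx
    rintro _ ⟨j, hj, rfl⟩
    rw [powers_dotProduct_coeff hg]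
    exact eval_divByMonic_X_sub_C_eq_zero (hroots k) (hroots j)
      (hinj.ne (ne_of_mem_of_not_mem hj hk))
  refine eq_zero_of_divDiffPairing_eq_zero hp hd (eq_zero_of_dvd_of_degree_lt (p := p) ?_ ?_)
  · have h := minpoly.dvd K (β k) hpair
    rwa [← minpoly.eq_of_irreducible_of_monic hirr (hroot k) hp] at h
  · exact (degree_eq_natDegree hp.ne_zero).symm ▸ degree_divDiffPairing_lt p x

end divDiffPairing

end Polynomial

theorem stmt_3_general {d : ℕ}
    (f : Polynomial ℤ) (hmon : f.Monic) (hdeg : f.natDegree = d)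
    (hirr : Irreducible (f.map (Int.castRingHom ℚ)))
    (β : Fin d → ℂ) (hinj : Function.Injective β)
    (hroot : ∀ j, Polynomial.aeval (β j) f = 0)
    (z : Fin d → (Fin d → ℂ)) (hz : ∀ j i, z j i = β j ^ (i : ℕ))
    (I : Finset (Fin d)) (hproper : I ≠ Finset.univ)
    (x : Fin d → ℂ)
    (hx : x ∈ Submodule.span ℂ (z '' (I : Set (Fin d))))
    (hrat : ∀ i, ∃ q : ℚ, x i = (q : ℂ)) :
    x = 0 := by
  choose q hq using hrat
  have hxq : x = fun i => algebraMap ℚ ℂ (q i) := funext fun i => by rw [hq, eq_ratCast]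
  have hzβ : z = fun j (i : Fin d) => β j ^ (i : ℕ) := funext fun j => funext (hz j)
  have hrootℚ : ∀ j, aeval (β j) (f.map (Int.castRingHom ℚ)) = 0 := fun j => by
    rw [← algebraMap_int_eq, aeval_map_algebraMap, hroot]
  have hq0 : q = 0 := eq_zero_of_mem_span_powers (hmon.map _) hirr
    (by rw [hmon.natDegree_map, hdeg]) hinj hrootℚ hproper (hxq ▸ hzβ ▸ hx)
  ext i
  simp [hq, hq0]

/-- For a monic integer polynomial `f` irreducible over `ℚ` with roots
`β 0, …, β (d-1)` and Vandermonde columns `z j = (1, β j, …, (β j)^(d-1))`,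
the complex span of `{z j : j ∈ I}`, for `I` a proper nonempty subset of the
index set, meets `ℚ^d` only in `0`. -/
theorem stmt_3 {d : ℕ} (hd : 1 ≤ d)
    (f : Polynomial ℤ) (hmon : f.Monic) (hdeg : f.natDegree = d)
    (hirr : Irreducible (f.map (Int.castRingHom ℚ)))
    (β : Fin d → ℂ) (hinj : Function.Injective β)
    (hroot : ∀ j, Polynomial.aeval (β j) f = 0)
    (z : Fin d → (Fin d → ℂ)) (hz : ∀ j i, z j i = β j ^ (i : ℕ))
    (I : Finset (Fin d)) (hne : I.Nonempty) (hproper : I ≠ Finset.univ)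
    (x : Fin d → ℂ)
    (hx : x ∈ Submodule.span ℂ (z '' (I : Set (Fin d))))
    (hrat : ∀ i, ∃ q : ℚ, x i = (q : ℂ)) :
    x = 0 :=
  stmt_3_general f hmon hdeg hirr β hinj hroot z hz I hproper x hx hrat
end

section
/- Let u ≥ 2 and let l₁,…,l_u be non-negative integers with M = max{l_j}. The minimal K ∈ ℕ for which there exists a matrix K ∈ {0,1}^{u×K} satisfying (i) the i-th row sums to l_i for all i, and (ii) each column sum lies in {1,…,u−1}, is K = max{M, ⌈(l₁+⋯+l_u)/(u−1)⌉}. -/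
/-!
Each row of a well distributing matrix has at most `K` ones and each column at most `u - 1`, so
`l i ≤ K` and, counting the ones by columns, `∑ l i ≤ K (u - 1)`; this is the lower bound.

Conversely, let `K` satisfy `l i ≤ K ≤ ∑ l i ≤ K (u - 1)`. Lay the ones of row `0`, then row `1`, …
consecutively on the positions `0, 1, …, ∑ l i - 1` and put position `t` into column `t % K`.
A row occupies at most `K` consecutive positions, so it meets every column at most once; column
`j` receives the positions `j, j + K, j + 2K, …` below `∑ l i`, of which there are at least one
and at most `u - 1`.
-/

open Finset

def IsWellDistributing {u : ℕ} (l : Fin u → ℕ) (K : ℕ) (A : Fin u → Fin K → ℕ) : Prop :=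
  (∀ i j, A i j ≤ 1) ∧ (∀ i, ∑ j, A i j = l i) ∧ (∀ j, 1 ≤ ∑ i, A i j ∧ ∑ i, A i j ≤ u - 1)

namespace IsWellDistributing

variable {u K : ℕ} {l : Fin u → ℕ} {A : Fin u → Fin K → ℕ}

theorem le (hA : IsWellDistributing l K A) (i : Fin u) : l i ≤ K :=
  calc l i = ∑ j, A i j := (hA.2.1 i).symm
    _ ≤ ∑ _j : Fin K, 1 := sum_le_sum fun j _ => hA.1 i j
    _ = K := by simp

theorem sum_le (hA : IsWellDistributing l K A) : ∑ i, l i ≤ K * (u - 1) :=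
  calc ∑ i, l i = ∑ i, ∑ j, A i j := sum_congr rfl fun i _ => (hA.2.1 i).symm
    _ = ∑ j, ∑ i, A i j := sum_comm
    _ ≤ ∑ _j : Fin K, (u - 1) := sum_le_sum fun j _ => (hA.2.2 j).2
    _ = K * (u - 1) := by simp

end IsWellDistributing

section ModCount

variable {K : ℕ}

theorem one_le_card_filter_mod_eq {S j : ℕ} (hj : j < K) (hKS : K ≤ S) :
    1 ≤ #{t ∈ range S | t % K = j} :=
  card_pos.mpr ⟨j, by simp [Nat.mod_eq_of_lt hj, hj.trans_le hKS]⟩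

theorem card_filter_mod_eq_le {S c j : ℕ} (hS : S ≤ K * c) : #{t ∈ range S | t % K = j} ≤ c := by
  refine (card_le_card_of_injOn (· / K) (fun t ht => ?_) fun s hs t ht hst => ?_).trans_eq
    (card_range c)
  · simp only [coe_filter, mem_range, Set.mem_ofPred_eq, coe_range, Set.mem_Iio] at ht ⊢
    exact Nat.div_lt_of_lt_mul (ht.1.trans_le hS)
  · simp only [coe_filter, mem_range, Set.mem_ofPred_eq] at hs ht
    rw [← Nat.mod_add_div s K, ← Nat.mod_add_div t K, hs.2, ht.2, show s / K = t / K from hst]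

theorem card_filter_Ico_mod_eq_le_one {a b j : ℕ} (h : b ≤ a + K) :
    #{t ∈ Ico a b | t % K = j} ≤ 1 := by
  refine card_le_one.2 fun s hs t ht => ?_
  simp only [mem_filter, mem_Ico] at hs ht
  exact Nat.ModEq.eq_of_abs_lt (hs.2.trans ht.2.symm) (abs_sub_lt_iff.2 ⟨by omega, by omega⟩)

theorem sum_card_filter_mod_eq (hK : 0 < K) (s : Finset ℕ) :
    ∑ j : Fin K, #{t ∈ s | t % K = j} = #s := by
  rw [card_eq_sum_card_fiberwise (f := (· % K)) (t := range K)
    fun t _ => mem_range.2 (Nat.mod_lt t hK), Fin.sum_univ_eq_sum_range (fun j => #{t ∈ s | t % K = j})]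

end ModCount

theorem sum_range_card_filter_Ico {p : ℕ → ℕ} (hp : Monotone p) (P : ℕ → Prop) [DecidablePred P]
    (n : ℕ) :
    ∑ i ∈ range n, #{t ∈ Ico (p i) (p (i + 1)) | P t} = #{t ∈ Ico (p 0) (p n) | P t} := by
  induction n with
  | zero => simp
  | succ n ih =>
    rw [sum_range_succ, ih, ← card_union_of_disjoint
      (disjoint_filter_filter (Ico_disjoint_Ico_consecutive _ _ _)), ← filter_union,
      Ico_union_Ico_eq_Ico (hp (Nat.zero_le n)) (hp (Nat.le_succ n))]

section WrapAround

variable {u : ℕ} (l : Fin u → ℕ) (K : ℕ)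

def rowStart (n : ℕ) : ℕ := ∑ i with i.val < n, l i

theorem rowStart_zero : rowStart l 0 = 0 := by simp [rowStart]

theorem rowStart_of_le {n : ℕ} (hn : u ≤ n) : rowStart l n = ∑ i, l i := by
  rw [rowStart, filter_true_of_mem fun i _ => i.isLt.trans_le hn]

theorem rowStart_succ (i : Fin u) : rowStart l (i + 1) = rowStart l i + l i := by
  simp only [rowStart, sum_filter]
  rw [← Fintype.sum_ite_eq' i l, ← sum_add_distrib]
  refine sum_congr rfl fun k _ => ?_
  by_cases hk : k = i
  · subst hk; simp
  · have : (k : ℕ) ≠ i := Fin.val_ne_of_ne hk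
    simp only [hk, if_false, add_zero]
    congr 1; apply propext; omega

theorem rowStart_mono : Monotone (rowStart l) := fun a b hab =>
  sum_le_sum_of_subset fun i => by
    simp only [mem_filter, mem_univ, true_and]
    omega

def wrapAroundMatrix (i : Fin u) (j : Fin K) : ℕ :=
  #{t ∈ Ico (rowStart l i) (rowStart l (i + 1)) | t % K = j}

variable {l K}

theorem wrapAroundMatrix_le_one (hl : ∀ i, l i ≤ K) (i : Fin u) (j : Fin K) :
    wrapAroundMatrix l K i j ≤ 1 :=
  card_filter_Ico_mod_eq_le_one (by rw [rowStart_succ]; exact Nat.add_le_add_left (hl i) _)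

theorem sum_wrapAroundMatrix_row (hl : ∀ i, l i ≤ K) (i : Fin u) :
    ∑ j, wrapAroundMatrix l K i j = l i := by
  rcases K.eq_zero_or_pos with rfl | hK
  · simpa using (hl i).antisymm' (Nat.zero_le _)
  simp only [wrapAroundMatrix]
  rw [sum_card_filter_mod_eq hK, Nat.card_Ico, rowStart_succ]
  omega

theorem sum_wrapAroundMatrix_col (j : Fin K) :
    ∑ i, wrapAroundMatrix l K i j = #{t ∈ range (∑ i, l i) | t % K = j} := by
  simp only [wrapAroundMatrix]
  rw [Fin.sum_univ_eq_sum_range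
      (fun i => #{t ∈ Ico (rowStart l i) (rowStart l (i + 1)) | t % K = j}),
    sum_range_card_filter_Ico (rowStart_mono l), rowStart_zero, rowStart_of_le l le_rfl,
    range_eq_Ico]

theorem isWellDistributing_wrapAroundMatrix (hl : ∀ i, l i ≤ K) (hKS : K ≤ ∑ i, l i)
    (hSK : ∑ i, l i ≤ K * (u - 1)) : IsWellDistributing l K (wrapAroundMatrix l K) :=
  ⟨wrapAroundMatrix_le_one hl, sum_wrapAroundMatrix_row hl, fun j => by
    rw [sum_wrapAroundMatrix_col]
    exact ⟨one_le_card_filter_mod_eq j.isLt hKS, card_filter_mod_eq_le hSK⟩⟩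

end WrapAround

theorem Nat.ceil_div_le_iff {α : Type*} [Semifield α] [LinearOrder α] [IsStrictOrderedRing α]
    [FloorSemiring α] {a d K : ℕ} (hd : 0 < d) : ⌈(a : α) / d⌉₊ ≤ K ↔ a ≤ K * d := by
  rw [Nat.ceil_le, div_le_iff₀ (by exact_mod_cast hd)]
  exact_mod_cast Iff.rfl

/-- The minimal number of columns `K` for which a well distributing 0-1 matrix
with row sums `l i` and column sums in `{1, …, u-1}` exists is
`max (max_i l_i) ⌈(∑ l_i)/(u-1)⌉`. -/
theorem stmt_5 {u : ℕ} (hu : 2 ≤ u) (l : Fin u → ℕ) :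
    IsLeast
      {K : ℕ | ∃ A : Fin u → Fin K → ℕ,
        (∀ i j, A i j ≤ 1) ∧
        (∀ i, ∑ j, A i j = l i) ∧
        (∀ j, 1 ≤ ∑ i, A i j ∧ ∑ i, A i j ≤ u - 1)}
      (max (Finset.univ.sup l) ⌈((∑ i, l i : ℚ)) / ((u : ℚ) - 1)⌉₊) := by
  have hd : 0 < u - 1 := by omega
  rw [← Nat.cast_sum, ← Nat.cast_pred (by omega)]
  constructor
  · exact ⟨_, isWellDistributing_wrapAroundMatrix
      (fun i => (le_sup (mem_univ i)).trans (le_max_left _ _))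
      (max_le (Finset.sup_le fun i _ => single_le_sum (fun _ _ => Nat.zero_le _) (mem_univ i))
        ((Nat.ceil_div_le_iff hd).2 (Nat.le_mul_of_pos_right _ hd)))
      ((Nat.ceil_div_le_iff hd).1 (le_max_right _ _))⟩
  · rintro K ⟨A, hA⟩
    exact max_le (Finset.sup_le fun i _ => IsWellDistributing.le hA i)
      ((Nat.ceil_div_le_iff hd).2 (IsWellDistributing.sum_le hA))
end

section
/- Let B be a non-singular real (s−n)×(s−n) matrix diagonalizable over ℂ. Then there exists a bounded set Ω ⊂ ℝ^{s−n} with closure(interior(Ω)) = closure(Ω) ≠ ∅ and B·closure(Ω) ⊆ closure(Ω) if and only if the spectral radius of B is at most 1. -/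
open Matrix

/-- Any square complex matrix gives a bounded linear map on `Fin m → ℂ`. -/
lemma aux_opBound {m : ℕ} (M : Matrix (Fin m) (Fin m) ℂ) :
    ∃ c, 0 ≤ c ∧ ∀ v, ‖M.mulVec v‖ ≤ c * ‖v‖ := by
  let L := LinearMap.toContinuousLinearMap (Matrix.mulVecLin M)
  exact ⟨‖L‖, norm_nonneg _, fun v => L.le_opNorm v⟩

lemma aux_normCoe {m : ℕ} (x : Fin m → ℝ) : ‖(fun k => (x k : ℂ))‖ = ‖x‖ := by
  simp [Pi.norm_def, Complex.nnnorm_real]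

lemma aux_mapPow {m : ℕ} (B : Matrix (Fin m) (Fin m) ℝ) (n : ℕ) :
    (B.map (Complex.ofReal : ℝ → ℂ)) ^ n = (B ^ n).map Complex.ofReal := by
  have : B.map (Complex.ofReal : ℝ → ℂ) = (Complex.ofRealHom.mapMatrix) B := rfl
  rw [this, ← map_pow]; rfl

lemma aux_mulVecCoe {m : ℕ} (M : Matrix (Fin m) (Fin m) ℝ) (x : Fin m → ℝ) :
    (M.map (Complex.ofReal : ℝ → ℂ)).mulVec (fun k => (x k : ℂ))
      = fun k => ((M.mulVec x k : ℝ) : ℂ) := by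
  funext k
  simp [Matrix.mulVec, dotProduct, Matrix.map_apply]

lemma aux_reim {m : ℕ} (M : Matrix (Fin m) (Fin m) ℝ) (v : Fin m → ℂ) (k : Fin m) :
    (M.map (Complex.ofReal : ℝ → ℂ)).mulVec v k
      = (M.mulVec (fun j => (v j).re) k : ℝ)
        + (M.mulVec (fun j => (v j).im) k : ℝ) * Complex.I := by
  simp only [Matrix.mulVec, dotProduct, Matrix.map_apply]
  push_cast
  rw [Finset.sum_mul, ← Finset.sum_add_distrib]
  congr 1; funext j
  rw [mul_assoc, ← mul_add]
  congr 1
  exact (Complex.re_add_im (v j)).symm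

lemma aux_diag_mulVec {m : ℕ} (D : Matrix (Fin m) (Fin m) ℂ) (hD : D.IsDiag)
    (w : Fin m → ℂ) (i : Fin m) : D.mulVec w i = D i i * w i := by
  simp only [Matrix.mulVec, dotProduct]
  rw [Finset.sum_eq_single i]
  · intro j _ hj; rw [hD (Ne.symm hj), zero_mul]
  · intro h; exact absurd (Finset.mem_univ i) h

/-- For a non-singular real matrix `B` diagonalizable over `ℂ`, there exists a
bounded window `Ω` with `closure (interior Ω) = closure Ω ≠ ∅` and
`B · closure Ω ⊆ closure Ω` if and only if all (complex) eigenvalues of `B`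
have modulus at most 1 (spectral radius `≤ 1`). -/
theorem stmt_11 {m : ℕ} (B : Matrix (Fin m) (Fin m) ℝ)
    (hB : IsUnit B.det)
    (hdiag : ∃ P D : Matrix (Fin m) (Fin m) ℂ, IsUnit P.det ∧ D.IsDiag ∧
      B.map (Complex.ofReal : ℝ → ℂ) = P * D * P⁻¹) :
    (∃ Ω : Set (Fin m → ℝ), Bornology.IsBounded Ω ∧
        closure (interior Ω) = closure Ω ∧ (closure Ω).Nonempty ∧
        (∀ x ∈ closure Ω, B.mulVec x ∈ closure Ω)) ↔
      ∀ μ ∈ spectrum ℂ (B.map (Complex.ofReal : ℝ → ℂ)), ‖μ‖ ≤ 1 := by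
  set A := B.map (Complex.ofReal : ℝ → ℂ) with hA
  have hcont : ∀ M : Matrix (Fin m) (Fin m) ℝ, Continuous (fun y => M.mulVec y) :=
    fun M => LinearMap.continuous_of_finiteDimensional (Matrix.mulVecLin M)
  constructor
  · rintro ⟨Ω, hbdd, hci, hne, hinv⟩ μ hμ
    -- interior is nonempty
    have hint : (interior Ω).Nonempty := by
      by_contra h
      rw [Set.not_nonempty_iff_eq_empty] at h
      rw [h, closure_empty] at hci
      exact hne.ne_empty hci.symm
    obtain ⟨x0, hx0⟩ := hint
    obtain ⟨ε, hε, hball⟩ := Metric.isOpen_iff.mp isOpen_interior x0 hx0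
    obtain ⟨R, hR⟩ := hbdd.closure.subset_closedBall 0
    -- iterates stay in closure Ω
    have hiter : ∀ n, ∀ x ∈ closure Ω, (B ^ n).mulVec x ∈ closure Ω := by
      intro n
      induction n with
      | zero => intro x hx; simpa [Matrix.one_mulVec] using hx
      | succ n ih =>
          intro x hx
          rw [pow_succ, ← Matrix.mulVec_mulVec]
          exact ih _ (hinv x hx)
    have hx0K : x0 ∈ closure Ω := subset_closure (interior_subset hx0)
    have hR0 : 0 ≤ R := by
      have := hR hx0K
      rw [Metric.mem_closedBall, dist_zero_right] at this
      exact le_trans (norm_nonneg _) this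
    -- bound on a small ball
    have hsmall : ∀ n (x : Fin m → ℝ), ‖x‖ < ε → ‖(B ^ n).mulVec x‖ ≤ 2 * R := by
      intro n x hx
      have hmem : x0 + x ∈ Metric.ball x0 ε := by
        rw [Metric.mem_ball, dist_eq_norm, add_sub_cancel_left]; exact hx
      have h1 : x0 + x ∈ closure Ω := subset_closure (interior_subset (hball hmem))
      have h2 := hR (hiter n _ h1)
      have h3 := hR (hiter n _ hx0K)
      rw [Metric.mem_closedBall, dist_zero_right] at h2 h3
      have e : (B ^ n).mulVec x = (B ^ n).mulVec (x0 + x) - (B ^ n).mulVec x0 := by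
        rw [Matrix.mulVec_add]; abel
      rw [e]
      calc ‖(B ^ n).mulVec (x0 + x) - (B ^ n).mulVec x0‖
          ≤ ‖(B ^ n).mulVec (x0 + x)‖ + ‖(B ^ n).mulVec x0‖ := norm_sub_le _ _
        _ ≤ R + R := add_le_add h2 h3
        _ = 2 * R := by ring
    -- homogeneous bound
    have hhom : ∀ n (x : Fin m → ℝ), ‖(B ^ n).mulVec x‖ ≤ (4 * R / ε) * ‖x‖ := by
      intro n x
      rcases eq_or_ne x 0 with rfl | hx
      · simp [Matrix.mulVec_zero]
      · have hxn : 0 < ‖x‖ := norm_pos_iff.mpr hx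
        have hy : ‖(ε / (2 * ‖x‖)) • x‖ < ε := by
          rw [norm_smul, Real.norm_eq_abs, abs_of_pos (by positivity)]
          have e : ε / (2 * ‖x‖) * ‖x‖ = ε / 2 := by field_simp
          rw [e]; linarith
        have hb := hsmall n _ hy
        rw [Matrix.mulVec_smul, norm_smul, Real.norm_eq_abs,
          abs_of_pos (by positivity)] at hb
        have h4 : ‖(B ^ n).mulVec x‖ ≤ 2 * R / (ε / (2 * ‖x‖)) := by
          rw [le_div_iff₀ (by positivity)]
          calc ‖(B ^ n).mulVec x‖ * (ε / (2 * ‖x‖))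
              = ε / (2 * ‖x‖) * ‖(B ^ n).mulVec x‖ := by ring
            _ ≤ 2 * R := hb
        calc ‖(B ^ n).mulVec x‖ ≤ 2 * R / (ε / (2 * ‖x‖)) := h4
          _ = (4 * R / ε) * ‖x‖ := by field_simp; ring
    have hc10 : 0 ≤ 4 * R / ε := by positivity
    -- complex bound
    have hcx : ∀ n (v : Fin m → ℂ), ‖(A ^ n).mulVec v‖ ≤ (8 * R / ε) * ‖v‖ := by
      intro n v
      have hre : ‖(fun j => (v j).re)‖ ≤ ‖v‖ := by
        refine (pi_norm_le_iff_of_nonneg (norm_nonneg v)).mpr fun k => ?_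
        calc ‖(v k).re‖ = |(v k).re| := rfl
          _ ≤ ‖v k‖ := Complex.abs_re_le_norm _
          _ = ‖v k‖ := rfl
          _ ≤ ‖v‖ := norm_le_pi_norm v k
      have him : ‖(fun j => (v j).im)‖ ≤ ‖v‖ := by
        refine (pi_norm_le_iff_of_nonneg (norm_nonneg v)).mpr fun k => ?_
        calc ‖(v k).im‖ = |(v k).im| := rfl
          _ ≤ ‖v k‖ := Complex.abs_im_le_norm _
          _ = ‖v k‖ := rfl
          _ ≤ ‖v‖ := norm_le_pi_norm v k
      refine (pi_norm_le_iff_of_nonneg (by positivity)).mpr fun k => ?_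
      rw [hA, aux_mapPow, aux_reim]
      calc ‖((B ^ n).mulVec (fun j => (v j).re) k : ℂ)
              + ((B ^ n).mulVec (fun j => (v j).im) k : ℂ) * Complex.I‖
          ≤ ‖((B ^ n).mulVec (fun j => (v j).re) k : ℂ)‖
            + ‖((B ^ n).mulVec (fun j => (v j).im) k : ℂ) * Complex.I‖ := norm_add_le _ _
        _ = ‖(B ^ n).mulVec (fun j => (v j).re) k‖
            + ‖(B ^ n).mulVec (fun j => (v j).im) k‖ := by simp
        _ ≤ ‖(B ^ n).mulVec (fun j => (v j).re)‖
            + ‖(B ^ n).mulVec (fun j => (v j).im)‖ :=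
            add_le_add (norm_le_pi_norm _ k) (norm_le_pi_norm _ k)
        _ ≤ (4 * R / ε) * ‖(fun j => (v j).re)‖ + (4 * R / ε) * ‖(fun j => (v j).im)‖ :=
            add_le_add (hhom n _) (hhom n _)
        _ ≤ (4 * R / ε) * ‖v‖ + (4 * R / ε) * ‖v‖ :=
            add_le_add (mul_le_mul_of_nonneg_left hre hc10)
              (mul_le_mul_of_nonneg_left him hc10)
        _ = (8 * R / ε) * ‖v‖ := by ring
    -- eigenvector for μ
    rw [spectrum.mem_iff] at hμ
    have hdet : (algebraMap ℂ (Matrix (Fin m) (Fin m) ℂ) μ - A).det = 0 := by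
      by_contra h
      exact hμ ((Matrix.isUnit_iff_isUnit_det _).mpr (isUnit_iff_ne_zero.mpr h))
    obtain ⟨v, hv0, hv⟩ := (Matrix.exists_mulVec_eq_zero_iff).mpr hdet
    have hev : A.mulVec v = μ • v := by
      rw [Matrix.sub_mulVec] at hv
      have := sub_eq_zero.mp hv
      rw [Algebra.algebraMap_eq_smul_one, Matrix.smul_mulVec,
        Matrix.one_mulVec] at this
      exact this.symm
    have hevn : ∀ n, (A ^ n).mulVec v = μ ^ n • v := by
      intro n
      induction n with
      | zero => simp [Matrix.one_mulVec]
      | succ n ih =>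
          rw [pow_succ, ← Matrix.mulVec_mulVec, hev, Matrix.mulVec_smul, ih,
            smul_smul, pow_succ, mul_comm]
    have hv00 : 0 < ‖v‖ := norm_pos_iff.mpr hv0
    have hpow : ∀ n : ℕ, ‖μ‖ ^ n ≤ 8 * R / ε := by
      intro n
      have := hcx n v
      rw [hevn n, norm_smul, norm_pow] at this
      exact le_of_mul_le_mul_right this hv00
    by_contra hgt
    push_neg at hgt
    obtain ⟨n, hn⟩ := pow_unbounded_of_one_lt (8 * R / ε) hgt
    exact absurd (hpow n) (not_le.mpr hn)
  · intro h
    obtain ⟨P, D, hP, hD, hPDP⟩ := hdiag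
    obtain ⟨u, hu⟩ := (Matrix.isUnit_iff_isUnit_det P).mpr hP
    have hui : ((u⁻¹ : _ˣ) : Matrix (Fin m) (Fin m) ℂ) = P⁻¹ := by
      rw [← hu, Matrix.coe_units_inv]
    -- all diagonal entries of D are eigenvalues
    have hDle : ∀ i, ‖D i i‖ ≤ 1 := by
      intro i
      have hmem : D i i ∈ spectrum ℂ A := by
        rw [spectrum.mem_iff]
        intro hunit
        have hdet := (Matrix.isUnit_iff_isUnit_det _).mp hunit
        have e1 : algebraMap ℂ (Matrix (Fin m) (Fin m) ℂ) (D i i) - A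
            = P * ((D i i) • 1 - D) * P⁻¹ := by
          rw [Algebra.algebraMap_eq_smul_one, hPDP, mul_sub, sub_mul]
          congr 2
          rw [mul_smul_comm, mul_one, smul_mul_assoc, Matrix.mul_nonsing_inv _ hP]
        have e2 : ((D i i) • (1 : Matrix (Fin m) (Fin m) ℂ) - D)
            = Matrix.diagonal (fun j => D i i - D j j) := by
          ext a b
          by_cases hab : a = b
          · subst hab; simp [Matrix.one_apply]
          · simp [Matrix.one_apply, hab, hD hab]
        rw [e1, Matrix.det_mul, Matrix.det_mul, e2, Matrix.det_diagonal] at hdet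
        have hz : (∏ j, (D i i - D j j)) = 0 :=
          Finset.prod_eq_zero (Finset.mem_univ i) (sub_self (D i i))
        rw [hz] at hdet
        simp at hdet
      have := h _ hmem
      exact this
    -- powers of D are contractions
    have hDstep : ∀ w : Fin m → ℂ, ‖D.mulVec w‖ ≤ ‖w‖ := by
      intro w
      refine (pi_norm_le_iff_of_nonneg (norm_nonneg w)).mpr fun k => ?_
      rw [aux_diag_mulVec D hD w k, norm_mul]
      calc ‖D k k‖ * ‖w k‖ ≤ 1 * ‖w k‖ :=
            mul_le_mul_of_nonneg_right (hDle k) (norm_nonneg _)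
        _ = ‖w k‖ := one_mul _
        _ ≤ ‖w‖ := norm_le_pi_norm w k
    have hDn : ∀ n (w : Fin m → ℂ), ‖(D ^ n).mulVec w‖ ≤ ‖w‖ := by
      intro n
      induction n with
      | zero => intro w; simp [Matrix.one_mulVec]
      | succ n ih =>
          intro w
          rw [pow_succ, ← Matrix.mulVec_mulVec]
          exact (ih _).trans (hDstep w)
    -- conjugation of powers
    have hconj : ∀ n : ℕ, A ^ n = P * D ^ n * P⁻¹ := by
      intro n
      rw [hPDP, ← hui, ← hu, Units.conj_pow]
    obtain ⟨cP, hcP0, hcP⟩ := aux_opBound P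
    obtain ⟨cQ, hcQ0, hcQ⟩ := aux_opBound P⁻¹
    have hAn : ∀ n (v : Fin m → ℂ), ‖(A ^ n).mulVec v‖ ≤ (cP * cQ) * ‖v‖ := by
      intro n v
      rw [hconj n, ← Matrix.mulVec_mulVec, ← Matrix.mulVec_mulVec]
      calc ‖P.mulVec ((D ^ n).mulVec (P⁻¹.mulVec v))‖
          ≤ cP * ‖(D ^ n).mulVec (P⁻¹.mulVec v)‖ := hcP _
        _ ≤ cP * ‖P⁻¹.mulVec v‖ := mul_le_mul_of_nonneg_left (hDn n _) hcP0
        _ ≤ cP * (cQ * ‖v‖) := mul_le_mul_of_nonneg_left (hcQ _) hcP0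
        _ = (cP * cQ) * ‖v‖ := by ring
    have hBn : ∀ n (x : Fin m → ℝ), ‖(B ^ n).mulVec x‖ ≤ (cP * cQ) * ‖x‖ := by
      intro n x
      have e : (A ^ n).mulVec (fun k => (x k : ℂ)) = fun k => (((B ^ n).mulVec x k : ℝ) : ℂ) := by
        rw [hA, aux_mapPow]; exact aux_mulVecCoe _ x
      calc ‖(B ^ n).mulVec x‖ = ‖(fun k => (((B ^ n).mulVec x k : ℝ) : ℂ))‖ :=
            (aux_normCoe _).symm
        _ = ‖(A ^ n).mulVec (fun k => (x k : ℂ))‖ := by rw [e]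
        _ ≤ (cP * cQ) * ‖(fun k => (x k : ℂ))‖ := hAn n _
        _ = (cP * cQ) * ‖x‖ := by rw [aux_normCoe]
    set c := cP * cQ with hc
    have hc0 : 0 ≤ c := mul_nonneg hcP0 hcQ0
    -- the window
    refine ⟨⋃ n : ℕ, (fun x => (B ^ n).mulVec x) '' Metric.ball 0 1, ?_, ?_, ?_, ?_⟩
    · refine (Metric.isBounded_closedBall (x := (0 : Fin m → ℝ)) (r := c)).subset ?_
      rintro y hy
      rw [Set.mem_iUnion] at hy
      obtain ⟨n, x, hx, rfl⟩ := hy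
      rw [Metric.mem_closedBall, dist_zero_right]
      rw [Metric.mem_ball, dist_zero_right] at hx
      calc ‖(B ^ n).mulVec x‖ ≤ c * ‖x‖ := hBn n x
        _ ≤ c * 1 := mul_le_mul_of_nonneg_left hx.le hc0
        _ = c := mul_one c
    · have hopen : IsOpen (⋃ n : ℕ, (fun x => (B ^ n).mulVec x) '' Metric.ball (0 : Fin m → ℝ) 1) := by
        refine isOpen_iUnion fun n => ?_
        have hBu : IsUnit (B ^ n).det := by rw [Matrix.det_pow]; exact hB.pow n
        have himg : (fun x => (B ^ n).mulVec x) '' Metric.ball (0 : Fin m → ℝ) 1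
            = (fun y => ((B ^ n)⁻¹).mulVec y) ⁻¹' Metric.ball 0 1 := by
          ext y
          constructor
          · rintro ⟨x, hx, rfl⟩
            simpa [Matrix.mulVec_mulVec, Matrix.nonsing_inv_mul _ hBu,
              Matrix.one_mulVec] using hx
          · intro hy
            exact ⟨_, hy, by
              simp [Matrix.mulVec_mulVec, Matrix.mul_nonsing_inv _ hBu,
                Matrix.one_mulVec]⟩
        rw [himg]
        exact (hcont _).isOpen_preimage _ Metric.isOpen_ball
      rw [hopen.interior_eq]
    · refine Set.Nonempty.closure ⟨0, ?_⟩
      rw [Set.mem_iUnion]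
      exact ⟨0, 0, Metric.mem_ball_self one_pos, by simp [Matrix.mulVec_zero]⟩
    · intro x hx
      have hmaps : B.mulVec '' (⋃ n : ℕ, (fun x => (B ^ n).mulVec x) '' Metric.ball (0 : Fin m → ℝ) 1)
          ⊆ ⋃ n : ℕ, (fun x => (B ^ n).mulVec x) '' Metric.ball (0 : Fin m → ℝ) 1 := by
        rintro y ⟨z, hz, rfl⟩
        rw [Set.mem_iUnion] at hz ⊢
        obtain ⟨n, w, hw, rfl⟩ := hz
        exact ⟨n + 1, w, hw, by rw [Matrix.mulVec_mulVec, ← pow_succ']⟩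
      have h1 : B.mulVec x ∈ B.mulVec '' closure (⋃ n : ℕ, (fun x => (B ^ n).mulVec x) '' Metric.ball (0 : Fin m → ℝ) 1) :=
        Set.mem_image_of_mem _ hx
      have h2 := image_closure_subset_closure_image (f := B.mulVec) (hcont B)
        (s := ⋃ n : ℕ, (fun x => (B ^ n).mulVec x) '' Metric.ball (0 : Fin m → ℝ) 1)
      exact closure_mono hmaps (h2 h1)
end

section
/- Let p, q ∈ ℤ and let λ be a non-real root of X² − pX − q (so p² + 4q < 0). Let m ≥ 1, A = I_m ⊗ R, B = R where R = [[Re λ, −Im λ],[Im λ, Re λ]], C = I_{m+1} ⊗ C_f with C_f = [[0, q],[1, p]], and L = H ⊗ [[1, Re λ],[0, Im λ]] for any H ∈ ℝ^{(m+1)×(m+1)}. Then diag(A, B)·L = L·C. -/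
open Matrix Kronecker

/-!
With `M = [[1, Re λ], [0, Im λ]]`, the real and imaginary parts of `λ² = pλ + q` say exactly
that `R M = M C_f`. The reindexed block matrix `diag(I_m ⊗ R, R)` is `I_{m+1} ⊗ R`, so by the
mixed-product property both sides equal `H ⊗ (R M) = H ⊗ (M C_f)`.
-/

theorem Matrix.reindex_fromBlocks_one_kronecker {α n : Type*} [Semiring α] [DecidableEq n]
    {m : ℕ} (R : Matrix n n α) (e : (Fin m × n) ⊕ n ≃ Fin (m + 1) × n)
    (he₁ : ∀ i a, e (Sum.inl (i, a)) = (i.castSucc, a))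
    (he₂ : ∀ a, e (Sum.inr a) = (Fin.last m, a)) :
    reindex e e (fromBlocks ((1 : Matrix (Fin m) (Fin m) α) ⊗ₖ R) 0 0 R) =
      (1 : Matrix (Fin (m + 1)) (Fin (m + 1)) α) ⊗ₖ R := by
  rw [← Equiv.eq_symm_apply, reindex_symm, ← fromBlocks_toBlocks (reindex _ _ _),
    fromBlocks_inj]
  refine ⟨?_, ?_, ?_, ?_⟩ <;> ext <;>
    simp [toBlocks₁₁, toBlocks₁₂, toBlocks₂₁, toBlocks₂₂, he₁, he₂, one_apply,
      (Fin.castSucc_lt_last _).ne, (Fin.castSucc_lt_last _).ne']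

theorem rotation_mul_eq_mul_companion {p q : ℝ} {z : ℂ} (hz : z ^ 2 = p * z + q) :
    !![z.re, -z.im; z.im, z.re] * !![1, z.re; 0, z.im] =
      !![1, z.re; 0, z.im] * !![0, q; 1, p] := by
  have hre : z.re ^ 2 - z.im ^ 2 = p * z.re + q := by
    simpa [sq] using congrArg Complex.re hz
  have him : 2 * z.re * z.im = p * z.im := by
    have := congrArg Complex.im hz
    simp only [sq, Complex.mul_im, Complex.add_im, Complex.ofReal_re, Complex.ofReal_im] at this
    linarith
  ext i j
  fin_cases i <;> fin_cases j <;> simp [mul_apply, Fin.sum_univ_two] <;> linarith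

theorem stmt_12_general (p q : ℤ) (lam : ℂ)
    (hroot : lam ^ 2 = (p : ℂ) * lam + (q : ℂ))
    (m : ℕ)
    (R : Matrix (Fin 2) (Fin 2) ℝ) (hR : R = !![lam.re, -lam.im; lam.im, lam.re])
    (Cf : Matrix (Fin 2) (Fin 2) ℝ) (hCf : Cf = !![0, (q : ℝ); 1, (p : ℝ)])
    (H : Matrix (Fin (m + 1)) (Fin (m + 1)) ℝ)
    (L : Matrix (Fin (m + 1) × Fin 2) (Fin (m + 1) × Fin 2) ℝ)
    (hL : L = H ⊗ₖ !![1, lam.re; 0, lam.im])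
    (A : Matrix (Fin m × Fin 2) (Fin m × Fin 2) ℝ)
    (hA : A = (1 : Matrix (Fin m) (Fin m) ℝ) ⊗ₖ R)
    (B : Matrix (Fin 2) (Fin 2) ℝ) (hB : B = R)
    (e : ((Fin m × Fin 2) ⊕ Fin 2) ≃ (Fin (m + 1) × Fin 2))
    (he1 : ∀ (i : Fin m) (a : Fin 2), e (Sum.inl (i, a)) = (i.castSucc, a))
    (he2 : ∀ a : Fin 2, e (Sum.inr a) = (Fin.last m, a)) :
    (Matrix.reindex e e (Matrix.fromBlocks A 0 0 B)) * L =
      L * ((1 : Matrix (Fin (m + 1)) (Fin (m + 1)) ℝ) ⊗ₖ Cf) := by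
  have hRM : R * !![1, lam.re; 0, lam.im] = !![1, lam.re; 0, lam.im] * Cf := by
    rw [hR, hCf]
    exact rotation_mul_eq_mul_companion (by exact_mod_cast hroot)
  rw [hA, hB, reindex_fromBlocks_one_kronecker R e he1 he2, hL, ← mul_kronecker_mul,
    ← mul_kronecker_mul, one_mul, mul_one, hRM]

/-- For a non-real root `λ` of `X² − pX − q`, with `A = I_m ⊗ R`, `B = R`,
`R` the rotation-scaling matrix of `λ`, `C = I_{m+1} ⊗ C_f` and
`L = H ⊗ [[1, Re λ],[0, Im λ]]` for any real `H`, one has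
`diag(A,B) · L = L · C` (under the natural identification of indices). -/
theorem stmt_12 (p q : ℤ) (lam : ℂ) (him : lam.im ≠ 0)
    (hroot : lam ^ 2 = (p : ℂ) * lam + (q : ℂ))
    (m : ℕ) (hm : 1 ≤ m)
    (R : Matrix (Fin 2) (Fin 2) ℝ) (hR : R = !![lam.re, -lam.im; lam.im, lam.re])
    (Cf : Matrix (Fin 2) (Fin 2) ℝ) (hCf : Cf = !![0, (q : ℝ); 1, (p : ℝ)])
    (H : Matrix (Fin (m + 1)) (Fin (m + 1)) ℝ)
    (L : Matrix (Fin (m + 1) × Fin 2) (Fin (m + 1) × Fin 2) ℝ)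
    (hL : L = H ⊗ₖ !![1, lam.re; 0, lam.im])
    (A : Matrix (Fin m × Fin 2) (Fin m × Fin 2) ℝ)
    (hA : A = (1 : Matrix (Fin m) (Fin m) ℝ) ⊗ₖ R)
    (B : Matrix (Fin 2) (Fin 2) ℝ) (hB : B = R)
    (e : ((Fin m × Fin 2) ⊕ Fin 2) ≃ (Fin (m + 1) × Fin 2))
    (he1 : ∀ (i : Fin m) (a : Fin 2), e (Sum.inl (i, a)) = (i.castSucc, a))
    (he2 : ∀ a : Fin 2, e (Sum.inr a) = (Fin.last m, a)) :
    (Matrix.reindex e e (Matrix.fromBlocks A 0 0 B)) * L =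
      L * ((1 : Matrix (Fin (m + 1)) (Fin (m + 1)) ℝ) ⊗ₖ Cf) :=
  stmt_12_general p q lam hroot m R hR Cf hCf H L hL A hA B hB e he1 he2
end

section
/- Let f ∈ ℤ[X] be monic and irreducible over ℚ with all roots of modulus at most 1. Then every root of f has modulus exactly 1 and f is a cyclotomic polynomial (all roots are roots of unity). -/
open Polynomial

theorem abs_prod_le_one (s : Multiset ℂ) (h : ∀ y ∈ s, ‖y‖ ≤ 1) :
    ‖s.prod‖ ≤ 1 := by
  induction s using Multiset.induction with
  | empty => simp
  | cons a t ih =>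
    rw [Multiset.prod_cons, norm_mul]
    have ha := h a (Multiset.mem_cons_self a t)
    have ht := ih fun y hy => h y (Multiset.mem_cons_of_mem hy)
    nlinarith [norm_nonneg a, norm_nonneg t.prod]

/-- Kronecker's theorem: a monic integer polynomial, irreducible over `ℚ`,
with nonzero constant term, all of whose complex roots have modulus at most 1,
has all its roots of modulus exactly 1, all roots are roots of unity, and it
is a cyclotomic polynomial. -/
theorem stmt_17 (f : Polynomial ℤ) (hmon : f.Monic)
    (hirr : Irreducible (f.map (Int.castRingHom ℚ)))
    (hconst : f.coeff 0 ≠ 0)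
    (hroots : ∀ μ : ℂ, Polynomial.aeval μ f = 0 → ‖μ‖ ≤ 1) :
    (∀ μ : ℂ, Polynomial.aeval μ f = 0 → ‖μ‖ = 1) ∧
    (∀ μ : ℂ, Polynomial.aeval μ f = 0 → ∃ k : ℕ, 0 < k ∧ μ ^ k = 1) ∧
    ∃ n : ℕ, 0 < n ∧ f = Polynomial.cyclotomic n ℤ := by
  have hmapQ : Int.castRingHom ℚ = algebraMap ℤ ℚ := rfl
  set fC : Polynomial ℂ := f.map (algebraMap ℤ ℂ) with hfC
  have hfCmon : fC.Monic := hmon.map _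
  have hfCne : fC ≠ 0 := hfCmon.ne_zero
  have hroot_mem : ∀ μ : ℂ, Polynomial.aeval μ f = 0 ↔ μ ∈ fC.roots := by
    intro μ
    rw [mem_roots hfCne, IsRoot.def, hfC, eval_map, ← aeval_def]
  -- part 1
  have h1 : ∀ μ : ℂ, Polynomial.aeval μ f = 0 → ‖μ‖ = 1 := by
    intro μ hμ
    have hmem := (hroot_mem μ).1 hμ
    have hsplit : fC.Splits := IsAlgClosed.splits _
    have hprod := hsplit.coeff_zero_eq_prod_roots_of_monic hfCmon
    have hc0 : (1 : ℝ) ≤ ‖fC.coeff 0‖ := by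
      rw [hfC, coeff_map]
      simp only [algebraMap_int_eq, eq_intCast, Complex.norm_intCast]
      exact_mod_cast Int.one_le_abs hconst
    have habs : ‖fC.roots.prod‖ = ‖fC.coeff 0‖ := by
      rw [hprod]; simp [norm_mul, Complex.norm_pow]
    have herase : μ * (fC.roots.erase μ).prod = fC.roots.prod :=
      Multiset.prod_erase hmem
    have hrest : ‖(fC.roots.erase μ).prod‖ ≤ 1 := by
      exact abs_prod_le_one _ fun y hy =>
        hroots y ((hroot_mem y).2 (Multiset.mem_of_mem_erase hy))
    have hge : 1 ≤ ‖μ‖ := by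
      have := habs
      rw [← herase, norm_mul] at this
      nlinarith [hroots μ hμ, norm_nonneg μ,
        norm_nonneg (fC.roots.erase μ).prod]
    linarith [hroots μ hμ]
  -- minpoly
  have hminp : ∀ μ : ℂ, Polynomial.aeval μ f = 0 →
      minpoly ℚ μ = f.map (Int.castRingHom ℚ) := by
    intro μ hμ
    refine (minpoly.eq_of_irreducible_of_monic hirr ?_ (hmon.map _)).symm
    rw [hmapQ, aeval_map_algebraMap]
    exact hμ
  -- part 2
  have h2 : ∀ μ : ℂ, Polynomial.aeval μ f = 0 → ∃ k : ℕ, 0 < k ∧ μ ^ k = 1 := by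
    intro μ hμ
    have hint : IsIntegral ℤ μ := ⟨f, hmon, by rwa [← aeval_def]⟩
    have hintQ : IsIntegral ℚ μ := hint.tower_top
    let K := IntermediateField.adjoin ℚ ({μ} : Set ℂ)
    haveI : FiniteDimensional ℚ K :=
      IntermediateField.adjoin.finiteDimensional hintQ
    haveI : NumberField K := ⟨⟩
    set x : K := IntermediateField.AdjoinSimple.gen ℚ μ with hxdef
    have hxμ : algebraMap K ℂ x = μ := rfl
    have hx0 : Polynomial.aeval x f = 0 := by
      have : algebraMap K ℂ (Polynomial.aeval x f) = 0 := by
        rw [← aeval_algebraMap_apply, hxμ, hμ]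
      exact (map_eq_zero_iff _ (algebraMap K ℂ).injective).1 this
    have hxi : IsIntegral ℤ x := ⟨f, hmon, by rwa [← aeval_def]⟩
    have hxiQ : IsIntegral ℚ x := hxi.tower_top
    have hminx : minpoly ℚ x = f.map (Int.castRingHom ℚ) := by
      refine (minpoly.eq_of_irreducible_of_monic hirr ?_ (hmon.map _)).symm
      rw [hmapQ, aeval_map_algebraMap]; exact hx0
    have hnorm : ∀ φ : K →+* ℂ, ‖φ x‖ = 1 := by
      intro φ
      have hmem : φ x ∈ (minpoly ℚ x).rootSet ℂ := by
        rw [← NumberField.Embeddings.range_eval_eq_rootSet_minpoly K ℂ x]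
        exact ⟨φ, rfl⟩
      rw [mem_rootSet] at hmem
      have : Polynomial.aeval (φ x) f = 0 := by
        have := hmem.2
        rwa [hminx, hmapQ, aeval_map_algebraMap] at this
      exact h1 _ this
    obtain ⟨n, hn, hxn⟩ :=
      NumberField.Embeddings.pow_eq_one_of_norm_eq_one K ℂ hxi hnorm
    refine ⟨n, hn, ?_⟩
    have := congrArg (algebraMap K ℂ) hxn
    rwa [map_pow, hxμ, map_one] at this
  refine ⟨h1, h2, ?_⟩
  -- part 3
  have hdeg : 0 < fC.degree := by
    have : 0 < (f.map (Int.castRingHom ℚ)).natDegree := hirr.natDegree_pos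
    rw [hmon.natDegree_map] at this
    rw [← natDegree_pos_iff_degree_pos, hfC, hmon.natDegree_map]
    exact this
  obtain ⟨μ, hμroot⟩ := Complex.exists_root hdeg
  have hμ : Polynomial.aeval μ f = 0 := by
    rwa [hfC, IsRoot.def, eval_map, ← aeval_def] at hμroot
  obtain ⟨k, hk, hμk⟩ := h2 μ hμ
  have hfin : IsOfFinOrder μ := isOfFinOrder_iff_pow_eq_one.2 ⟨k, hk, hμk⟩
  have hprim : IsPrimitiveRoot μ (orderOf μ) := IsPrimitiveRoot.orderOf μ
  have hpos : 0 < orderOf μ := hfin.orderOf_pos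
  refine ⟨orderOf μ, hpos, ?_⟩
  have hcyc : Polynomial.cyclotomic (orderOf μ) ℚ = minpoly ℚ μ :=
    Polynomial.cyclotomic_eq_minpoly_rat hprim hpos
  have : (Polynomial.cyclotomic (orderOf μ) ℤ).map (Int.castRingHom ℚ)
      = f.map (Int.castRingHom ℚ) := by
    rw [map_cyclotomic_int, hcyc, hminp μ hμ]
  have hinj : Function.Injective (Int.castRingHom ℚ) := Int.cast_injective
  exact (Polynomial.map_injective _ hinj this).symm
end
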